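/- arXiv:1501.03067 — 5 statements merged into one kernel-verified Lean document; each statement's English description precedes it below -/
import Mathlib

section
/- Let A be a finite-dimensional k-algebra with d = dim_k A, and let P• = (P^i, d^i) be a bounded complex of finitely generated projective A-modules which is minimal, i.e. Im d^i ⊆ rad P^{i+1} for all i. If dim_k H^i(P•) ≤ c for all i, then for every i we have dim_k P^i ≤ d · (dim_k P^{i+1} + c). -/
open CategoryTheory

/-- The radical of a module `M` over `A`: the submodule `rad(A)·M`. -/
def modRad (A M : Type*) [Ring A] [AddCommGroup M] [Module A M] : Submodule A M :=
  Submodule.span A {y | ∃ a ∈ Ideal.jacobson (⊥ : Ideal A), ∃ x : M, a • x = y}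

/-- The dimension of an `A`-module over the base field `k`. -/
noncomputable def kdim (k : Type*) [Field k] (A : Type*) [Ring A] [Algebra k A]
    (M : Type*) [AddCommGroup M] [Module A M] : ℕ :=
  Module.finrank k (RestrictScalars k A M)

/-!
Write `top P = P ⧸ rad P`. By Nakayama's lemma any lift of a `k`-basis of `top Pⁱ` generates
`Pⁱ` over `A`, so `dim Pⁱ ≤ d · dim (top Pⁱ)`. Minimality says `Im dⁱ⁻¹ ⊆ rad Pⁱ`, so `top Pⁱ` is a
quotient of `Pⁱ ⧸ Im dⁱ⁻¹`, which is an extension of `Im dⁱ ⊆ Pⁱ⁺¹` by `Hⁱ`; hence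
`dim (top Pⁱ) ≤ dim Pⁱ⁺¹ + c`.
-/

open Module
open LinearMap (ker range)

section Radical

variable {A M : Type*} [Ring A] [AddCommGroup M] [Module A M]

theorem modRad_eq_jacobson_smul_top : modRad A M = Ring.jacobson A • (⊤ : Submodule A M) := by
  rw [← Ideal.jacobson_bot]
  apply le_antisymm
  · rw [modRad, Submodule.span_le]
    rintro _ ⟨a, ha, x, rfl⟩
    exact Submodule.smul_mem_smul ha Submodule.mem_top
  · exact Submodule.smul_le.mpr fun a ha x _ => Submodule.subset_span ⟨a, ha, x, rfl⟩

theorem map_mkQ_modRad (N : Submodule A M) : (modRad A M).map N.mkQ = modRad A (M ⧸ N) := by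
  rw [modRad_eq_jacobson_smul_top, modRad_eq_jacobson_smul_top, Submodule.map_smul'',
    Submodule.map_top, Submodule.range_mkQ]

theorem eq_top_of_sup_modRad_eq_top [Module.Finite A M] {N : Submodule A M}
    (h : N ⊔ modRad A M = ⊤) : N = ⊤ := by
  have hQ : (⊤ : Submodule A (M ⧸ N)) ≤ Ring.jacobson A • ⊤ := by
    rw [← modRad_eq_jacobson_smul_top, ← map_mkQ_modRad, ← N.range_mkQ, ← Submodule.map_top,
      ← h, Submodule.map_sup, Submodule.mkQ_map_self, bot_sup_eq]
  have hbot := Submodule.FG.eq_bot_of_le_jacobson_smul Module.Finite.fg_top hQ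
  rw [← N.ker_mkQ, LinearMap.ker, ← hbot, Submodule.comap_top]

end Radical

section Dimension

variable {k A : Type*} [Field k] [Ring A] [Algebra k A]
variable {M : Type*} [AddCommGroup M] [Module A M] [Module k M] [IsScalarTower k A M]

theorem kdim_eq_finrank : kdim k A M = finrank k M :=
  LinearEquiv.finrank_eq
    { RestrictScalars.addEquiv k A M with
      map_smul' := fun c x => by simp [RestrictScalars.addEquiv_map_smul] }

theorem finrank_le_finrank_mul_finrank_quotient_modRad [FiniteDimensional k A]
    [Module.Finite A M] : finrank k M ≤ finrank k A * finrank k (M ⧸ modRad A M) := by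
  have : Module.Finite k M := Module.Finite.trans A M
  let b := Module.finBasis k (M ⧸ modRad A M)
  choose x hx using fun i => (modRad A M).mkQ_surjective (b i)
  have hspan : Submodule.span A (Set.range x) = ⊤ := by
    refine eq_top_of_sup_modRad_eq_top ?_
    have hb := Submodule.span_le_restrictScalars k A (Set.range b)
    rw [b.span_eq] at hb
    have hmap : (Submodule.span A (Set.range x)).map (modRad A M).mkQ = ⊤ := by
      rw [Submodule.map_span, ← Set.range_comp, show (modRad A M).mkQ ∘ x = b from funext hx]
      exact eq_top_iff.2 fun y _ => hb Submodule.mem_top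
    rw [sup_comm, ← Submodule.comap_map_mkQ, hmap, Submodule.comap_top]
  have hsurj : Function.Surjective ((Fintype.linearCombination A x).restrictScalars k) := by
    rw [← LinearMap.range_eq_top, LinearMap.range_restrictScalars,
      Fintype.range_linearCombination, hspan, Submodule.restrictScalars_top]
  calc finrank k M ≤ finrank k (Fin (finrank k (M ⧸ modRad A M)) → A) :=
        LinearMap.finrank_le_finrank_of_surjective hsurj
    _ = _ := by simp [Module.finrank_pi_fintype, mul_comm]

theorem Submodule.finrank_quotient_add_finrank_of_isScalarTower [Module.Finite k M]
    (N : Submodule A M) : finrank k (M ⧸ N) + finrank k N = finrank k M := by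
  rw [← (Submodule.Quotient.restrictScalarsEquiv k N).finrank_eq]
  exact Submodule.finrank_quotient_add_finrank (N.restrictScalars k)

theorem Submodule.finrank_quotient_le_of_le [Module.Finite k M] {N P : Submodule A M}
    (h : N ≤ P) : finrank k (M ⧸ P) ≤ finrank k (M ⧸ N) :=
  LinearMap.finrank_le_finrank_of_surjective (f := (Submodule.factor h).restrictScalars k)
    (Submodule.factor_surjective h)

variable {M₁ M₃ : Type*} [AddCommGroup M₁] [Module A M₁]
  [AddCommGroup M₃] [Module A M₃] [Module k M₃] [IsScalarTower k A M₃]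

theorem finrank_quotient_range_le [Module.Finite k M] [Module.Finite k M₃]
    (f : M₁ →ₗ[A] M) (g : M →ₗ[A] M₃) (hfg : range f ≤ ker g) :
    finrank k (M ⧸ range f) ≤
      finrank k M₃ + finrank k (ker g ⧸ (range f).comap (ker g).subtype) := by
  have : Module.Finite k (ker g) :=
    Module.Finite.of_injective ((ker g).subtype.restrictScalars k) Subtype.val_injective
  have hM := Submodule.finrank_quotient_add_finrank_of_isScalarTower (k := k) (range f)
  have hZ := Submodule.finrank_quotient_add_finrank_of_isScalarTower (k := k)
    ((range f).comap (ker g).subtype)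
  have hB := ((Submodule.comapSubtypeEquivOfLe hfg).restrictScalars k).finrank_eq
  have hg := LinearMap.finrank_range_add_finrank_ker (g.restrictScalars k)
  have hker : finrank k (ker (g.restrictScalars k)) = finrank k (ker g) := rfl
  have hrange := Submodule.finrank_le (range (g.restrictScalars k))
  omega

theorem finrank_le_finrank_mul_of_range_le_modRad [FiniteDimensional k A] [Module.Finite A M]
    [Module.Finite A M₃] (f : M₁ →ₗ[A] M) (g : M →ₗ[A] M₃) (hf : range f ≤ modRad A M)
    (hfg : range f ≤ ker g) :
    finrank k M ≤
      finrank k A * (finrank k M₃ + finrank k (ker g ⧸ (range f).comap (ker g).subtype)) := by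
  have : Module.Finite k M := Module.Finite.trans A M
  have : Module.Finite k M₃ := Module.Finite.trans A M₃
  calc finrank k M ≤ finrank k A * finrank k (M ⧸ modRad A M) :=
        finrank_le_finrank_mul_finrank_quotient_modRad
    _ ≤ finrank k A * finrank k (M ⧸ range f) := by
        gcongr; exact Submodule.finrank_quotient_le_of_le hf
    _ ≤ _ := by gcongr; exact finrank_quotient_range_le f g hfg

end Dimension

theorem CategoryTheory.ShortComplex.kdim_X₂_le {k A : Type*} [Field k] [Ring A] [Algebra k A]
    [FiniteDimensional k A] (S : ShortComplex (ModuleCat A)) [Module.Finite A S.X₂]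
    [Module.Finite A S.X₃] (hS : range S.f.hom ≤ modRad A S.X₂) :
    kdim k A S.X₂ ≤ finrank k A * (kdim k A S.X₃ + kdim k A S.homology) := by
  let _ := Module.restrictScalars k A S.X₂
  let _ := Module.restrictScalars k A S.X₃
  let _ := Module.restrictScalars k A S.homology
  have := IsScalarTower.restrictScalars k A S.X₂
  have := IsScalarTower.restrictScalars k A S.X₃
  have := IsScalarTower.restrictScalars k A S.homology
  let e : S.homology ≃ₗ[A] ker S.g.hom ⧸ (range S.f.hom).comap (ker S.g.hom).subtype :=
    S.moduleCatHomologyIso.toLinearEquiv ≪≫ₗ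
      Submodule.quotEquivOfEq _ _ (LinearMap.range_codRestrict _ _ _)
  rw [kdim_eq_finrank, kdim_eq_finrank, kdim_eq_finrank, (e.restrictScalars k).finrank_eq]
  exact finrank_le_finrank_mul_of_range_le_modRad S.f.hom S.g.hom hS
    (LinearMap.range_le_ker_iff.2 (ModuleCat.hom_ext_iff.1 S.zero))

theorem stmt_1_general (k : Type*) [Field k] (A : Type*) [Ring A] [Algebra k A]
    [FiniteDimensional k A]
    (X : CochainComplex (ModuleCat A) ℤ)
    (hfg : ∀ i : ℤ, Module.Finite A (X.X i))
    (hmin : ∀ i : ℤ, LinearMap.range (X.d i (i + 1)).hom ≤ modRad A (X.X (i + 1)))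
    (c : ℕ) (hc : ∀ i : ℤ, kdim k A (X.homology i) ≤ c) :
    ∀ i : ℤ, kdim k A (X.X i) ≤
      Module.finrank k A * (kdim k A (X.X (i + 1)) + c) := by
  intro i
  have : Module.Finite A (X.sc i).X₂ := hfg i
  have : Module.Finite A (X.sc i).X₃ := hfg _
  have hS : range (X.sc i).f.hom ≤ modRad A (X.X i) := by
    have h := hmin (i - 1)
    rw [sub_add_cancel] at h
    change range (X.d ((ComplexShape.up ℤ).prev i) i).hom ≤ _
    rwa [CochainComplex.prev]
  have h : kdim k A (X.X i) ≤
      finrank k A * (kdim k A (X.X ((ComplexShape.up ℤ).next i)) + kdim k A (X.homology i)) :=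
    (X.sc i).kdim_X₂_le hS
  rw [CochainComplex.next] at h
  exact h.trans (by gcongr; exact hc i)

/-- Let `A` be a finite-dimensional `k`-algebra of dimension `d` and `X` a bounded
minimal complex of finitely generated projective `A`-modules.  If `dim_k Hⁱ(X) ≤ c`
for all `i`, then `dim_k Xⁱ ≤ d · (dim_k Xⁱ⁺¹ + c)` for every `i`. -/
theorem stmt_1 (k : Type*) [Field k] (A : Type*) [Ring A] [Algebra k A]
    [FiniteDimensional k A]
    (X : CochainComplex (ModuleCat A) ℤ)
    (hbdd : ∃ a b : ℤ, ∀ i : ℤ, (i < a ∨ b < i) → Subsingleton (X.X i))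
    (hfg : ∀ i : ℤ, Module.Finite A (X.X i))
    (hproj : ∀ i : ℤ, Module.Projective A (X.X i))
    (hmin : ∀ i : ℤ, LinearMap.range (X.d i (i + 1)).hom ≤ modRad A (X.X (i + 1)))
    (c : ℕ) (hc : ∀ i : ℤ, kdim k A (X.homology i) ≤ c) :
    ∀ i : ℤ, kdim k A (X.X i) ≤
      Module.finrank k A * (kdim k A (X.X (i + 1)) + c) :=
  stmt_1_general k A X hfg hmin c hc
end

section
/- Let P• be a bounded minimal complex of finitely generated projective modules over a finite-dimensional k-algebra A. Then every null-homotopic chain endomorphism f• of P• lies in the Jacobson radical of the endomorphism algebra End_{C(A)}(P•); in particular every null-homotopic chain endomorphism of P• is nilpotent. -/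
set_option synthInstance.maxHeartbeats 800000
set_option maxHeartbeats 1600000

open CategoryTheory

/-!
Minimality says every differential lands in `rad(A) • P`, hence so does every null-homotopic
map `f = d s + s d`, and since null-homotopic maps form a two-sided ideal, so does `y * f` for
every chain endomorphism `y`. A product of `n` maps landing in `rad(A) • P` lands in
`rad(A)ⁿ • P`, which vanishes for large `n` because the radical of the Artinian algebra `A` is
nilpotent. So every `y * f` is nilpotent, which puts `f` in the Jacobson radical.
-/

open Submodule in
theorem modRad_eq_jacobson_smul_top_s6 (A M : Type*) [Ring A] [AddCommGroup M] [Module A M] :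
    modRad A M = Ideal.jacobson (⊥ : Ideal A) • (⊤ : Submodule A M) := by
  refine le_antisymm (span_le.mpr ?_) (smul_le.mpr fun a ha x _ ↦ subset_span ⟨a, ha, x, rfl⟩)
  rintro _ ⟨a, ha, x, rfl⟩
  exact smul_mem_smul ha mem_top

theorem LinearMap.range_comp_le_smul_range {R M M' M'' : Type*} [Ring R] [AddCommGroup M]
    [AddCommGroup M'] [AddCommGroup M''] [Module R M] [Module R M'] [Module R M'']
    {I : Ideal R} {φ : M →ₗ[R] M'} (ψ : M' →ₗ[R] M'') (hφ : range φ ≤ I • ⊤) :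
    range (ψ ∘ₗ φ) ≤ I • range ψ := by
  rw [range_comp, range_eq_map ψ, ← Submodule.map_smul'']
  exact Submodule.map_mono hφ

theorem Ideal.mem_jacobson_bot_of_forall_isNilpotent_mul {R : Type*} [Ring R] {x : R}
    (h : ∀ y, IsNilpotent (y * x)) : x ∈ Ideal.jacobson (⊥ : Ideal R) := by
  refine Ideal.mem_jacobson_iff.mpr fun y ↦ ?_
  obtain ⟨u, hu⟩ : IsUnit (1 + y * x) := by
    simpa only [sub_neg_eq_add] using (h y).neg.isUnit_one_sub
  refine ⟨↑u⁻¹, (Submodule.mem_bot R).mpr ?_⟩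
  rw [mul_assoc, ← sub_eq_zero.mpr (u.inv_mul), hu]
  noncomm_ring

namespace CochainComplex

variable {A : Type*} [Ring A] {X : CochainComplex (ModuleCat A) ℤ}

theorem range_f_le_jacobson_smul_top_of_homotopy_zero
    (hmin : ∀ i : ℤ, LinearMap.range (X.d i (i + 1)).hom ≤ modRad A (X.X (i + 1)))
    {g : X ⟶ X} (hg : Homotopy g 0) (i : ℤ) :
    LinearMap.range (g.f i).hom ≤ Ideal.jacobson (⊥ : Ideal A) • ⊤ := by
  -- with `i = j + 1` both differentials in `g = d s + s d` have the shape `d p (p + 1)`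
  obtain ⟨j, rfl⟩ : ∃ j, i = j + 1 := ⟨i - 1, by ring⟩
  have hd : ∀ j, LinearMap.range (X.d j (j + 1)).hom ≤ Ideal.jacobson (⊥ : Ideal A) • ⊤ :=
    fun j ↦ (hmin j).trans (modRad_eq_jacobson_smul_top_s6 A _).le
  rw [hg.comm (j + 1), dNext_eq hg.hom (show (ComplexShape.up ℤ).Rel (j + 1) (j + 1 + 1) by simp),
    prevD_eq hg.hom (show (ComplexShape.up ℤ).Rel j (j + 1) by simp),
    HomologicalComplex.zero_f, add_zero, ModuleCat.hom_add, ModuleCat.hom_comp,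
    ModuleCat.hom_comp]
  refine (LinearMap.range_add_le _ _).trans (sup_le ?_ ?_)
  · exact (LinearMap.range_comp_le_smul_range _ (hd (j + 1))).trans
      (smul_mono_right _ le_top)
  · exact (LinearMap.range_comp_le_range _ _).trans (hd j)

theorem range_pow_f_le_jacobson_pow_smul_top {g : X ⟶ X}
    (hg : ∀ i, LinearMap.range (g.f i).hom ≤ Ideal.jacobson (⊥ : Ideal A) • ⊤) (n : ℕ) (i : ℤ) :
    LinearMap.range (((show End X from g) ^ n).f i).hom ≤
      Ideal.jacobson (⊥ : Ideal A) ^ n • ⊤ := by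
  induction n with
  | zero => rw [Submodule.pow_zero, Ideal.one_eq_top, Submodule.top_smul]; exact le_top
  | succ n ih =>
    rw [pow_succ', End.mul_def, HomologicalComplex.comp_f, ModuleCat.hom_comp, Submodule.pow_succ,
      Submodule.mul_smul]
    exact (LinearMap.range_comp_le_smul_range _ ih).trans (smul_mono_right _ (hg i))

theorem pow_eq_zero_of_homotopy_zero
    (hmin : ∀ i : ℤ, LinearMap.range (X.d i (i + 1)).hom ≤ modRad A (X.X (i + 1)))
    {g : X ⟶ X} (hg : Homotopy g 0) {n : ℕ} (hn : Ideal.jacobson (⊥ : Ideal A) ^ n = 0) :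
    (show End X from g) ^ n = 0 := by
  refine HomologicalComplex.hom_ext _ _ fun i ↦ ModuleCat.hom_ext ?_
  have h := range_pow_f_le_jacobson_pow_smul_top
    (range_f_le_jacobson_smul_top_of_homotopy_zero hmin hg) n i
  rw [hn, Submodule.zero_eq_bot, Submodule.bot_smul, le_bot_iff, LinearMap.range_eq_bot] at h
  exact h

end CochainComplex

theorem stmt_6_general (k : Type*) [Field k] (A : Type*) [Ring A] [Algebra k A]
    [FiniteDimensional k A]
    (X : CochainComplex (ModuleCat A) ℤ)
    (hmin : ∀ i : ℤ, LinearMap.range (X.d i (i + 1)).hom ≤ modRad A (X.X (i + 1)))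
    (f : X ⟶ X) (hf : Nonempty (Homotopy f 0)) :
    (show CategoryTheory.End X from f) ∈
        Ideal.jacobson (⊥ : Ideal (CategoryTheory.End X)) ∧
      ∃ n : ℕ, 0 < n ∧ (show CategoryTheory.End X from f) ^ n = 0 := by
  obtain ⟨h⟩ := hf
  have := IsArtinianRing.of_finite k A
  obtain ⟨n, hn⟩ := IsArtinianRing.isNilpotent_jacobson_bot (R := A)
  have hn' : Ideal.jacobson (⊥ : Ideal A) ^ (n + 1) = 0 := by rw [Submodule.pow_succ, hn, zero_mul]
  have hnil (y : CategoryTheory.End X) : IsNilpotent (y * show CategoryTheory.End X from f) :=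
    ⟨n + 1, CochainComplex.pow_eq_zero_of_homotopy_zero hmin (g := f ≫ y)
      ((h.compRight y).trans (.ofEq (by simp))) hn'⟩
  exact ⟨Ideal.mem_jacobson_bot_of_forall_isNilpotent_mul hnil, n + 1, n.succ_pos,
    CochainComplex.pow_eq_zero_of_homotopy_zero hmin h hn'⟩

/-- Every null-homotopic chain endomorphism of a bounded minimal complex of finitely
generated projective modules over a finite-dimensional algebra lies in the Jacobson
radical of the endomorphism ring of the complex; in particular it is nilpotent. -/
theorem stmt_6 (k : Type*) [Field k] (A : Type*) [Ring A] [Algebra k A]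
    [FiniteDimensional k A]
    (X : CochainComplex (ModuleCat A) ℤ)
    (hbdd : ∃ a b : ℤ, ∀ i : ℤ, (i < a ∨ b < i) → Subsingleton (X.X i))
    (hfg : ∀ i : ℤ, Module.Finite A (X.X i))
    (hproj : ∀ i : ℤ, Module.Projective A (X.X i))
    (hmin : ∀ i : ℤ, LinearMap.range (X.d i (i + 1)).hom ≤ modRad A (X.X (i + 1)))
    (f : X ⟶ X) (hf : Nonempty (Homotopy f 0)) :
    (show CategoryTheory.End X from f) ∈
        Ideal.jacobson (⊥ : Ideal (CategoryTheory.End X)) ∧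
      ∃ n : ℕ, 0 < n ∧ (show CategoryTheory.End X from f) ^ n = 0 :=
  stmt_6_general k A X hmin f hf
end

section
/- Let X be a set and f, g : X → ℕ functions for which there exist positive constants M, N with f(x) ≤ M·g(x) and g(x) ≤ N·f(x) for all x ∈ X. Suppose there is a strictly increasing sequence (r_i) of natural numbers such that for each i the fiber f^{-1}(r_i) is infinite. Then there is a strictly increasing sequence (d_i) of natural numbers such that for each i the fiber g^{-1}(d_i) is infinite. -/
/-- If two size functions `f g : X → ℕ` bound each other linearly (with positive
constants `M`, `N`), and there is a strictly increasing sequence of values `r i`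
each of which has infinite `f`-fiber, then there is a strictly increasing sequence
of values `d i` each of which has infinite `g`-fiber. -/
theorem stmt_11 (X : Type*) (f g : X → ℕ) (M N : ℕ) (hM : 0 < M) (hN : 0 < N)
    (hfg : ∀ x, f x ≤ M * g x) (hgf : ∀ x, g x ≤ N * f x)
    (r : ℕ → ℕ) (hr : StrictMono r) (hfib : ∀ i, {x | f x = r i}.Infinite) :
    ∃ d : ℕ → ℕ, StrictMono d ∧ ∀ i, {x | g x = d i}.Infinite := by
  set S : Set ℕ := {d | {x | g x = d}.Infinite} with hS
  have hunb : ∀ n : ℕ, ∃ d ∈ S, n < d := by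
    intro n
    obtain ⟨i, hi⟩ : ∃ i, M * n < r i :=
      ⟨M * n + 1, lt_of_lt_of_le (Nat.lt_succ_self _) hr.le_apply⟩
    by_contra hcon
    push_neg at hcon
    have hsub : {x | f x = r i} ⊆ ⋃ d ∈ Finset.Ioc n (N * r i), {x | g x = d} := by
      intro x hx
      have hx' : f x = r i := hx
      have h1 : n < g x := by
        have : M * n < M * g x := lt_of_lt_of_le (hx' ▸ hi) (hx' ▸ hfg x)
        exact lt_of_mul_lt_mul_left this (Nat.zero_le M)
      have h2 : g x ≤ N * r i := hx' ▸ hgf x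
      exact Set.mem_biUnion (Finset.mem_Ioc.mpr ⟨h1, h2⟩) rfl
    have hfin : {x | f x = r i}.Finite := by
      refine Set.Finite.subset (Set.Finite.biUnion
        (Finset.Ioc n (N * r i)).finite_toSet fun d hd => ?_) hsub
      have hdn : n < d := (Finset.mem_Ioc.mp hd).1
      exact Set.not_infinite.mp fun h => absurd hdn (not_lt.mpr (hcon d h))
    exact hfib i hfin
  have hSinf : S.Infinite := by
    by_contra hfin
    rw [Set.not_infinite] at hfin
    obtain ⟨n, hn⟩ := hfin.bddAbove
    obtain ⟨d, hdS, hdn⟩ := hunb n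
    exact absurd (hn hdS) (not_le.mpr hdn)
  refine ⟨Nat.nth (· ∈ S), Nat.nth_strictMono hSinf, fun i => ?_⟩
  exact Nat.nth_mem_of_infinite hSinf i
end

section
/- Let X be a set and f : X → ℕ a function, and suppose there is a strictly increasing sequence (r_i) such that each f^{-1}(r_i) is infinite, and g : X → ℕ satisfies (1/N)·f(x) ≤ g(x) ≤ N·f(x) for some N ≥ 1 and all x with f(x) > 0. If for every x ∈ X we have f(x) > 0, then there exist infinitely many values d ∈ ℕ with g^{-1}(d) infinite. -/
/-- Transfer of strong unboundedness along a two-sided linear comparison of size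
functions: if `f x ≤ N·g x` and `g x ≤ N·f x` for all `x`, `f` takes infinitely
many values `r i` (strictly increasing) with infinite fibers, and `f` is everywhere
positive, then there are infinitely many values `d` with `g`-fiber infinite. -/
theorem stmt_12 (X : Type*) (f g : X → ℕ) (N : ℕ) (hN : 1 ≤ N)
    (h1 : ∀ x, f x ≤ N * g x) (h2 : ∀ x, g x ≤ N * f x)
    (r : ℕ → ℕ) (hr : StrictMono r) (hfib : ∀ i, {x | f x = r i}.Infinite)
    (hf : ∀ x, 0 < f x) :
    {d : ℕ | {x | g x = d}.Infinite}.Infinite := by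
  by_contra h
  rw [Set.not_infinite] at h
  obtain ⟨M, hM⟩ := h.bddAbove
  set i := N * M + 1 with hi
  have hri : N * M < r i := lt_of_lt_of_le (Nat.lt_succ_self _) (hr.le_apply)
  -- pigeonhole on the infinite fiber of f at r i
  have hInf : Infinite {x | f x = r i} := (hfib i).to_subtype
  have hmap : ∀ x : {x | f x = r i}, g x.1 ≤ N * r i := by
    intro x
    calc g x.1 ≤ N * f x.1 := h2 x.1
    _ = N * r i := by rw [x.2]
  obtain ⟨d, hd⟩ := Finite.exists_infinite_fiber
    (fun x : {x | f x = r i} => (⟨g x.1, Nat.lt_succ_of_le (hmap x)⟩ : Fin (N * r i + 1)))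
  -- the fiber over d.1 of g is infinite
  have hgd : {x | g x = (d : ℕ)}.Infinite := by
    have : ((fun x : {x | f x = r i} =>
        (⟨g x.1, Nat.lt_succ_of_le (hmap x)⟩ : Fin (N * r i + 1))) ⁻¹' {d}).Infinite :=
      Set.infinite_coe_iff.mp hd
    have := this.image (Subtype.val_injective.injOn)
    apply this.mono
    rintro y ⟨x, hx, rfl⟩
    simpa [Fin.ext_iff] using hx
  have hdD : (d : ℕ) ∈ {d : ℕ | {x | g x = d}.Infinite} := hgd
  have hdM : (d : ℕ) ≤ M := hM hdD
  obtain ⟨x, hx⟩ := (Set.infinite_coe_iff.mp hd).nonempty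
  have hfx : f x.1 = r i := x.2
  have hgx : g x.1 = (d : ℕ) := by simpa [Fin.ext_iff] using hx
  have : r i ≤ N * M := by
    calc r i = f x.1 := hfx.symm
    _ ≤ N * g x.1 := h1 x.1
    _ = N * (d : ℕ) := by rw [hgx]
    _ ≤ N * M := Nat.mul_le_mul_left _ hdM
  omega
end

section
/- Let A be a finite-dimensional algebra and M a nonzero finite-dimensional A-module with local endomorphism ring. Let P• be the two-term complex P^{-1} → P^0 (in degrees 0 and 1) given by a minimal projective presentation of M. Then P• is an indecomposable complex, and H^1(P•) ≅ M. -/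
/-!
Taking `H¹ = coker d` is a ring homomorphism `End(P•) → End(coker d) ≅ End(M)`, and it reflects
units, so `End(P•)` is local because `End(M)` is. If a chain endomorphism `(f₁, f₀)` induces an
automorphism of `M`, then `f₀` is surjective modulo `ker p ⊆ rad P⁰`, hence surjective by Nakayama
and bijective by finite length. So `f₀` restricts to an automorphism of `Im d`, and the same
argument with `ker d ⊆ rad P⁻¹` makes `f₁` bijective.
-/

open CategoryTheory

/-- The endomorphism ring of a two-term complex `d : P1 → P0` (in degrees `0` and
`1`): pairs of endomorphisms commuting with the differential. -/
def cplxEnd {A P1 P0 : Type*} [Ring A] [AddCommGroup P1] [Module A P1]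
    [AddCommGroup P0] [Module A P0] (d : P1 →ₗ[A] P0) :
    Subring (Module.End A P1 × Module.End A P0) where
  carrier := {fg | ∀ x : P1, d (fg.1 x) = fg.2 (d x)}
  one_mem' := by intro x; simp [Module.End.one_apply]
  mul_mem' := by
    intro f g hf hg x
    simp only [Prod.fst_mul, Prod.snd_mul, Module.End.mul_apply]
    rw [hf, hg]
  add_mem' := by
    intro f g hf hg x
    simp only [Prod.fst_add, Prod.snd_add, LinearMap.add_apply, map_add]
    rw [hf, hg]
  zero_mem' := by intro x; simp
  neg_mem' := by
    intro f hf x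
    simp only [Prod.fst_neg, Prod.snd_neg, LinearMap.neg_apply, map_neg]
    rw [hf]

section Radical

variable {A P : Type*} [Ring A] [AddCommGroup P] [Module A P]

theorem modRad_le_jacobson : modRad A P ≤ Module.jacobson A P := by
  rw [modRad, Submodule.span_le]
  rintro _ ⟨a, ha, x, rfl⟩
  rw [Ideal.jacobson_bot] at ha
  exact Ring.jacobson_smul_top_le A P (Submodule.smul_mem_smul ha Submodule.mem_top)

/-- Nakayama's lemma. -/
theorem Submodule.eq_top_of_sup_eq_top_of_le_modRad [Module.Finite A P] {N K : Submodule A P}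
    (hK : K ≤ modRad A P) (h : N ⊔ K = ⊤) : N = ⊤ := by
  by_contra hN
  obtain ⟨m, hm, hNm⟩ := (eq_top_or_exists_le_coatom N).resolve_left hN
  have hKm : K ≤ m := hK.trans (modRad_le_jacobson.trans (sInf_le hm))
  exact hm.1 (top_unique (h ▸ sup_le hNm hKm))

theorem surjective_of_comp_eq_comp_of_ker_le_modRad [Module.Finite A P]
    {M : Type*} [AddCommGroup M] [Module A M] {p : P →ₗ[A] M} (hp : Function.Surjective p)
    (hker : LinearMap.ker p ≤ modRad A P) {f : Module.End A P} {F : Module.End A M}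
    (hF : Function.Surjective F) (hcomm : p ∘ₗ f = F ∘ₗ p) : Function.Surjective f := by
  rw [← LinearMap.range_eq_top]
  refine Submodule.eq_top_of_sup_eq_top_of_le_modRad hker (eq_top_iff.2 fun y _ => ?_)
  obtain ⟨x, hx⟩ := (hF.comp hp) (p y)
  have hxy : y - f x ∈ LinearMap.ker p := by
    rw [LinearMap.mem_ker, map_sub, ← LinearMap.comp_apply p f, hcomm]
    exact sub_eq_zero.2 hx.symm
  exact Submodule.mem_sup.2 ⟨f x, ⟨x, rfl⟩, y - f x, hxy, add_sub_cancel _ _⟩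

end Radical

namespace cplxEnd

variable {A P1 P0 : Type*} [Ring A] [AddCommGroup P1] [Module A P1]
  [AddCommGroup P0] [Module A P0] {d : P1 →ₗ[A] P0}

theorem range_le_comap (b : cplxEnd d) :
    LinearMap.range d ≤ (LinearMap.range d).comap b.1.2 := by
  rintro _ ⟨x, rfl⟩
  exact ⟨b.1.1 x, b.2 x⟩

variable (d) in
/-- The action of a chain endomorphism on `H¹ = coker d`. -/
def cokerMap : cplxEnd d →+* Module.End A (P0 ⧸ LinearMap.range d) where
  toFun b := (LinearMap.range d).mapQ (LinearMap.range d) b.1.2 (range_le_comap b)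
  map_one' := by ext; rfl
  map_mul' _ _ := by ext; rfl
  map_zero' := by ext; rfl
  map_add' _ _ := by ext; rfl

theorem cokerMap_comp_mkQ (b : cplxEnd d) :
    cokerMap d b ∘ₗ (LinearMap.range d).mkQ = (LinearMap.range d).mkQ ∘ₗ b.1.2 :=
  LinearMap.ext fun _ => rfl

theorem isUnit_of_bijective {b : cplxEnd d} (h1 : Function.Bijective b.1.1)
    (h0 : Function.Bijective b.1.2) : IsUnit b := by
  set e1 := LinearEquiv.ofBijective b.1.1 h1
  set e0 := LinearEquiv.ofBijective b.1.2 h0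
  have hinv : ((e1.symm : Module.End A P1), (e0.symm : Module.End A P0)) ∈ cplxEnd d := by
    intro x
    apply h0.1
    change b.1.2 (d (e1.symm x)) = e0 (e0.symm (d x))
    rw [← b.2, e0.apply_symm_apply]
    exact congrArg d (e1.apply_symm_apply x)
  refine isUnit_iff_exists.2 ⟨⟨_, hinv⟩, ?_, ?_⟩ <;>
    refine Subtype.ext (Prod.ext (LinearMap.ext fun x => ?_) (LinearMap.ext fun x => ?_))
  exacts [e1.apply_symm_apply x, e0.apply_symm_apply x, e1.symm_apply_apply x,
    e0.symm_apply_apply x]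

variable [IsNoetherian A P1] [IsNoetherian A P0] [IsArtinian A P0]

theorem isUnit_of_isUnit_cokerMap (hrange : LinearMap.range d ≤ modRad A P0)
    (hker : LinearMap.ker d ≤ modRad A P1) {b : cplxEnd d} (hb : IsUnit (cokerMap d b)) :
    IsUnit b := by
  have h0 : Function.Bijective b.1.2 := by
    refine IsNoetherian.bijective_of_surjective_endomorphism _ ?_
    refine surjective_of_comp_eq_comp_of_ker_le_modRad (Submodule.mkQ_surjective _)
      (by rwa [Submodule.ker_mkQ]) ((Module.End.isUnit_iff _).1 hb).2 (cokerMap_comp_mkQ b).symm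
  have hrestrict : Function.Surjective (b.1.2.restrict (range_le_comap b)) :=
    IsArtinian.surjective_of_injective_endomorphism _ fun _ _ hxy =>
      Subtype.ext (h0.1 (congrArg Subtype.val hxy))
  have h1 : Function.Bijective b.1.1 := by
    refine IsNoetherian.bijective_of_surjective_endomorphism _ ?_
    refine surjective_of_comp_eq_comp_of_ker_le_modRad d.surjective_rangeRestrict
      (by rwa [LinearMap.ker_rangeRestrict]) hrestrict (LinearMap.ext fun x => Subtype.ext (b.2 x))
  exact isUnit_of_bijective h1 h0

theorem isLocalHom_cokerMap (hrange : LinearMap.range d ≤ modRad A P0)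
    (hker : LinearMap.ker d ≤ modRad A P1) : IsLocalHom (cokerMap d) :=
  ⟨fun _ => isUnit_of_isUnit_cokerMap hrange hker⟩

theorem isLocalRing [IsLocalRing (Module.End A (P0 ⧸ LinearMap.range d))]
    (hrange : LinearMap.range d ≤ modRad A P0) (hker : LinearMap.ker d ≤ modRad A P1) :
    IsLocalRing (cplxEnd d) :=
  have := isLocalHom_cokerMap hrange hker
  (cokerMap d).domain_isLocalRing

end cplxEnd

theorem stmt_14_general (k : Type*) [Field k] (A : Type*) [Ring A] [Algebra k A]
    [FiniteDimensional k A]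
    (M : Type*) [AddCommGroup M] [Module A M]
    (hM : IsLocalRing (Module.End A M))
    (P0 : Type*) [AddCommGroup P0] [Module A P0] [Module.Finite A P0]
    (P1 : Type*) [AddCommGroup P1] [Module A P1] [Module.Finite A P1]
    (p : P0 →ₗ[A] M) (hp : Function.Surjective p)
    (hpcover : LinearMap.ker p ≤ modRad A P0)
    (d : P1 →ₗ[A] P0) (hd : LinearMap.range d = LinearMap.ker p)
    (hdcover : LinearMap.ker d ≤ modRad A P1) :
    IsLocalRing (cplxEnd d) ∧
      Nonempty ((P0 ⧸ LinearMap.range d) ≃ₗ[A] M) := by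
  let e : (P0 ⧸ LinearMap.range d) ≃ₗ[A] M :=
    (Submodule.quotEquivOfEq _ _ hd).trans (p.quotKerEquivOfSurjective hp)
  have : IsLocalRing (Module.End A (P0 ⧸ LinearMap.range d)) :=
    (e.conjRingEquiv : Module.End A _ →+* Module.End A M).domain_isLocalRing
  have : IsArtinianRing A := IsArtinianRing.of_finite k A
  have : IsNoetherianRing A := isNoetherian_of_tower k inferInstance
  exact ⟨cplxEnd.isLocalRing (hd ▸ hpcover) hdcover, ⟨e⟩⟩

/-- Let `M` be a nonzero finite-dimensional module with local endomorphism ring over a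
finite-dimensional algebra `A`, and let `P• : P1 → P0` (degrees `0`,`1`) be the
two-term complex given by a minimal projective presentation of `M`.  Then `P•` is an
indecomposable complex (its endomorphism ring is local) and `H¹(P•) ≅ M`. -/
theorem stmt_14 (k : Type*) [Field k] (A : Type*) [Ring A] [Algebra k A]
    [FiniteDimensional k A]
    (M : Type*) [AddCommGroup M] [Module A M] [Module.Finite A M]
    [Nontrivial M] (hM : IsLocalRing (Module.End A M))
    (P0 : Type*) [AddCommGroup P0] [Module A P0] [Module.Finite A P0]
    [Module.Projective A P0]
    (P1 : Type*) [AddCommGroup P1] [Module A P1] [Module.Finite A P1]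
    [Module.Projective A P1]
    (p : P0 →ₗ[A] M) (hp : Function.Surjective p)
    (hpcover : LinearMap.ker p ≤ modRad A P0)
    (d : P1 →ₗ[A] P0) (hd : LinearMap.range d = LinearMap.ker p)
    (hdcover : LinearMap.ker d ≤ modRad A P1) :
    IsLocalRing (cplxEnd d) ∧
      Nonempty ((P0 ⧸ LinearMap.range d) ≃ₗ[A] M) :=
  stmt_14_general k A M hM P0 P1 p hp hpcover d hd hdcover
end
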